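/- Let S be a simple cycle of a rooted cactus digraph (G, r). Then there exists a strongly minimum element v_S among the vertices of S with respect to the preorder ≼ (v_S = r if r lies on S, and v_S is the nearest connecting point to r otherwise). Moreover, for any two vertices v, w of S other than v_S, one has v ∼ w (i.e., v ≼ w and w ≼ v). -/

import Mathlib

structure DirGraph (V : Type) where
  Adj : V → V → Prop
  loopless : ∀ v, ¬ Adj v v

namespace DirGraph

variable {V V' : Type}

/-- A walk is a nonempty list of vertices with consecutive arcs. -/
def IsWalk (G : DirGraph V) : List V → Prop
  | [] => False
  | [_] => True
  | a :: b :: l => G.Adj a b ∧ G.IsWalk (b :: l)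

def IsWalkFromTo (G : DirGraph V) (p : List V) (x y : V) : Prop :=
  G.IsWalk p ∧ p.head? = some x ∧ p.getLast? = some y

def StronglyConnected (G : DirGraph V) : Prop :=
  ∀ x y : V, ∃ p, G.IsWalkFromTo p x y

def IsSimplePath (G : DirGraph V) (p : List V) : Prop :=
  G.IsWalk p ∧ p.Nodup

def IsSimplePathFromTo (G : DirGraph V) (p : List V) (x y : V) : Prop :=
  G.IsSimplePath p ∧ p.head? = some x ∧ p.getLast? = some y

/-- The arcs of a walk given as a list of vertices. -/
def arcs (p : List V) : List (V × V) := p.zip p.tail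

/-- The preterminal (second-to-last) vertex of a path. -/
def preterminal (p : List V) : Option V := p.dropLast.getLast?

/-- A simple cycle: a closed walk whose vertices are distinct except for the
repeated endpoint. -/
def IsSimpleCycle (G : DirGraph V) (p : List V) : Prop :=
  G.IsWalk p ∧ 2 ≤ p.length ∧ p.head? = p.getLast? ∧ p.dropLast.Nodup

/-- Two cycles are equal as cycles when they have the same set of arcs. -/
def CycleEquiv (p q : List V) : Prop :=
  ∀ a : V × V, a ∈ arcs p ↔ a ∈ arcs q

/-- Each arc lies in exactly one simple cycle (up to arc-set equality). -/
def CactusArcCond (G : DirGraph V) : Prop :=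
  ∀ x y, G.Adj x y →
    (∃ p, G.IsSimpleCycle p ∧ (x, y) ∈ arcs p) ∧
    (∀ p q, G.IsSimpleCycle p → (x, y) ∈ arcs p →
      G.IsSimpleCycle q → (x, y) ∈ arcs q → CycleEquiv p q)

/-- A cactus digraph: strongly connected and each arc lies in exactly one
simple cycle. -/
def IsCactus (G : DirGraph V) : Prop :=
  G.StronglyConnected ∧ G.CactusArcCond

noncomputable def inDeg (G : DirGraph V) (v : V) : ℕ := Nat.card {u // G.Adj u v}
noncomputable def outDeg (G : DirGraph V) (v : V) : ℕ := Nat.card {u // G.Adj v u}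

/-- A connecting point: a vertex shared by two distinct simple cycles. -/
def IsConnectingPoint (G : DirGraph V) (v : V) : Prop :=
  ∃ p q, G.IsSimpleCycle p ∧ G.IsSimpleCycle q ∧ ¬ CycleEquiv p q ∧ v ∈ p ∧ v ∈ q

/-- An expansion of digraphs. -/
structure IsExpansion (G' : DirGraph V') (G : DirGraph V) (φ : V' → V) : Prop where
  map_adj : ∀ ⦃x y⦄, G'.Adj x y → G.Adj (φ x) (φ y)
  vert_surj : Function.Surjective φ
  arc_surj : ∀ ⦃x y⦄, G.Adj x y → ∃ x' y', G'.Adj x' y' ∧ φ x' = x ∧ φ y' = y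
  lift : ∀ ⦃x y⦄, G.Adj x y → ∀ y', φ y' = y → ∃! x', G'.Adj x' y' ∧ φ x' = x

/-- A doubly bidirectionally connected pair. -/
def Dbcp (G : DirGraph V) (p q : V) : Prop :=
  p ≠ q ∧
  (∃ P Q, G.IsSimplePathFromTo P p q ∧ G.IsSimplePathFromTo Q p q ∧
    preterminal P ≠ preterminal Q) ∧
  (∃ P Q, G.IsSimplePathFromTo P q p ∧ G.IsSimplePathFromTo Q q p ∧
    preterminal P ≠ preterminal Q)

/-- Subgraph of a digraph: a vertex subset together with a subrelation of arcs
supported on it. -/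
structure Subgraph (G : DirGraph V) where
  verts : Set V
  Adj : V → V → Prop
  adj_sub : ∀ ⦃x y⦄, Adj x y → G.Adj x y
  mem_left : ∀ ⦃x y⦄, Adj x y → x ∈ verts
  mem_right : ∀ ⦃x y⦄, Adj x y → y ∈ verts

def Subgraph.toDirGraph {G : DirGraph V} (H : Subgraph G) : DirGraph V :=
  ⟨H.Adj, fun v h => G.loopless v (H.adj_sub h)⟩

/-- A sub-cactus digraph: a nonempty subgraph that is strongly connected (on
its vertex set) and in which each arc lies in exactly one simple cycle. -/
def Subgraph.IsCactus {G : DirGraph V} (H : Subgraph G) : Prop :=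
  H.verts.Nonempty ∧
  (∀ x ∈ H.verts, ∀ y ∈ H.verts, ∃ p, H.toDirGraph.IsWalkFromTo p x y) ∧
  H.toDirGraph.CactusArcCond

def Subgraph.inter {G : DirGraph V} (H K : Subgraph G) : Subgraph G where
  verts := H.verts ∩ K.verts
  Adj x y := H.Adj x y ∧ K.Adj x y
  adj_sub := fun _ _ h => H.adj_sub h.1
  mem_left := fun _ _ h => ⟨H.mem_left h.1, K.mem_left h.2⟩
  mem_right := fun _ _ h => ⟨H.mem_right h.1, K.mem_right h.2⟩

def Subgraph.le {G : DirGraph V} (H K : Subgraph G) : Prop :=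
  H.verts ⊆ K.verts ∧ ∀ ⦃x y⦄, H.Adj x y → K.Adj x y

/-- The single-vertex subgraph. -/
def singleVert (G : DirGraph V) (v : V) : Subgraph G where
  verts := {v}
  Adj _ _ := False
  adj_sub := by intro _ _ h; exact h.elim
  mem_left := by intro _ _ h; exact h.elim
  mem_right := by intro _ _ h; exact h.elim

/-- The intersection of all sub-cactus digraphs of `G` containing `W`. -/
def CsubOf (G : DirGraph V) (W : Set V) : Subgraph G where
  verts := {x | ∀ H : Subgraph G, H.IsCactus → W ⊆ H.verts → x ∈ H.verts}
  Adj x y := G.Adj x y ∧ ∀ H : Subgraph G, H.IsCactus → W ⊆ H.verts → H.Adj x y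
  adj_sub := fun _ _ h => h.1
  mem_left := fun _ _ h H hH hW => H.mem_left (h.2 H hH hW)
  mem_right := fun _ _ h H hH hW => H.mem_right (h.2 H hH hW)

open Classical in
/-- `C G r v`: the minimum sub-cactus digraph containing `{r, v}` (and the
single vertex `{r}` when `v = r`). -/
noncomputable def C (G : DirGraph V) (r v : V) : Subgraph G :=
  if v = r then singleVert G r else CsubOf G {r, v}

/-- The preorder on vertices of the rooted cactus digraph `(G, r)`:
`v ≼ w ↔ C(v) ⊆ C(w)`. -/
def pre (G : DirGraph V) (r v w : V) : Prop :=
  Subgraph.le (C G r v) (C G r w)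

end DirGraph

/-!
Delete the arcs of `S` and let `K` be the strong component of `r` in the remaining digraph.
Two distinct vertices of `S` cannot both lie in `K`: a walk between them avoiding the arcs of
`S` would close up, with a path along `S`, into a simple cycle sharing an arc with `S` without
being `S`. Strong connectivity gives one such vertex `t`, and `t = r` when `r ∈ S`.
The arcs of `G` inside `K` form a sub-cactus containing `r` and `t` but no other vertex of `S`,
so `w ≼ t` fails for `w ≠ t`. Conversely, a sub-cactus containing `r` and a vertex `v ≠ t` of
`S` cannot live inside `K`, so it uses an arc of `S` and hence contains all of `S`; this gives
`v ≼ w` for all `v, w ∈ S` with `w ≠ t`. When `r ∉ S`, the first arc of a walk from `t` to `r`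
inside `K` lies on a second cycle through `t`, so `t` is a connecting point.
-/

open Relation

theorem Relation.ReflTransGen.restrict_source_ne {α : Type*} {r : α → α → Prop} {a b : α}
    (h : ReflTransGen r a b) : ReflTransGen (fun u v => r u v ∧ u ≠ b) a b := by
  induction h using Relation.ReflTransGen.head_induction_on with
  | refl => rfl
  | @head a c hac _ ih =>
    by_cases hab : a = b
    · rw [hab]
    · exact ih.head ⟨hac, hab⟩

theorem List.exists_nodup_isChain_of_reflTransGen {α : Type*} {r : α → α → Prop} {a b : α}
    (h : ReflTransGen r a b) :
    ∃ l : List α, l.IsChain r ∧ l.Nodup ∧ l.head? = some a ∧ l.getLast? = some b := by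
  induction h using Relation.ReflTransGen.head_induction_on with
  | refl => exact ⟨[b], .singleton b, nodup_singleton b, rfl, rfl⟩
  | @head a c hac _ ih =>
    obtain ⟨l, hchain, hnd, hhead, hlast⟩ := ih
    obtain ⟨l', rfl⟩ : ∃ l', l = c :: l' := ⟨l.tail, (cons_head?_tail hhead).symm⟩
    by_cases hmem : a ∈ c :: l'
    · obtain ⟨l₁, l₂, hl⟩ := append_of_mem hmem
      rw [hl] at hchain hnd hlast
      refine ⟨a :: l₂, (isChain_split.1 hchain).2, hnd.sublist (sublist_append_right _ _), rfl, ?_⟩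
      rwa [getLast?_append_of_ne_nil _ (cons_ne_nil _ _)] at hlast
    · exact ⟨a :: c :: l', hchain.cons_cons hac, nodup_cons.2 ⟨hmem, hnd⟩, rfl,
        by simpa using hlast⟩

namespace DirGraph

variable {V : Type} {G : DirGraph V}

theorem isWalk_iff_isChain {p : List V} :
    G.IsWalk p ↔ p ≠ [] ∧ p.IsChain G.Adj := by
  induction p using List.twoStepInduction <;> simp_all [IsWalk]

theorem isChain_iff_forall_mem_arcs {R : V → V → Prop} {l : List V} :
    l.IsChain R ↔ ∀ a b, (a, b) ∈ arcs l → R a b := by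
  induction l using List.twoStepInduction <;> simp_all [arcs, or_imp, forall_and]

theorem mem_of_mem_arcs {l : List V} {a b : V} (h : (a, b) ∈ arcs l) : a ∈ l ∧ b ∈ l :=
  ⟨(List.of_mem_zip h).1, List.mem_of_mem_tail (List.of_mem_zip h).2⟩

theorem IsWalk.adj_of_mem_arcs {p : List V} (hp : G.IsWalk p) {a b : V} (h : (a, b) ∈ arcs p) :
    G.Adj a b :=
  isChain_iff_forall_mem_arcs.1 (isWalk_iff_isChain.1 hp).2 a b h

theorem IsWalkFromTo.reflTransGen {p : List V} {x y : V} (h : G.IsWalkFromTo p x y) :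
    ReflTransGen G.Adj x y := by
  obtain ⟨hwalk, hhead, hlast⟩ := h
  obtain ⟨l, rfl⟩ : ∃ l, p = x :: l := ⟨p.tail, (List.cons_head?_tail hhead).symm⟩
  refine List.relationReflTransGen_of_exists_isChain_cons l (isWalk_iff_isChain.1 hwalk).2 ?_
  rw [List.getLast?_eq_some_getLast (List.cons_ne_nil _ _)] at hlast
  exact Option.some_injective _ hlast

theorem exists_isWalkFromTo_of_reflTransGen {x y : V} (h : ReflTransGen G.Adj x y) :
    ∃ p, G.IsWalkFromTo p x y := by
  obtain ⟨p, hchain, -, hhead, hlast⟩ := List.exists_nodup_isChain_of_reflTransGen h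
  exact ⟨p, isWalk_iff_isChain.2 ⟨by rintro rfl; simp at hhead, hchain⟩, hhead, hlast⟩

theorem isSimpleCycle_of_forall_arcs {G' : DirGraph V} {p : List V} (hp : G.IsSimpleCycle p)
    (h : ∀ a b, (a, b) ∈ arcs p → G'.Adj a b) : G'.IsSimpleCycle p :=
  ⟨isWalk_iff_isChain.2 ⟨(isWalk_iff_isChain.1 hp.1).1, isChain_iff_forall_mem_arcs.2 h⟩, hp.2⟩

theorem isSimpleCycle_cons {P : List V} {y z : V} (hyz : G.Adj y z) (hP : P.IsChain G.Adj)
    (hnd : P.Nodup) (hhead : P.head? = some z) (hlast : P.getLast? = some y) :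
    G.IsSimpleCycle (y :: P) := by
  obtain ⟨P, rfl⟩ : ∃ l, P = z :: l := ⟨P.tail, (List.cons_head?_tail hhead).symm⟩
  have hy : y ∉ (z :: P).dropLast := by
    rw [List.getLast?_eq_some_getLast (List.cons_ne_nil _ _), Option.some_inj] at hlast
    rw [← List.dropLast_append_getLast (List.cons_ne_nil z P), hlast] at hnd
    exact fun hmem => List.disjoint_of_nodup_append hnd hmem (List.mem_singleton_self y)
  refine ⟨isWalk_iff_isChain.2 ⟨List.cons_ne_nil _ _, hP.cons_cons hyz⟩, by simp, ?_, ?_⟩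
  · rw [List.getLast?_cons_cons, hlast]; rfl
  · rw [List.dropLast_cons_of_ne_nil (List.cons_ne_nil _ _)]
    exact List.nodup_cons.2 ⟨hy, hnd.sublist (List.dropLast_sublist _)⟩

theorem IsSimpleCycle.transGen_arcs {S : List V} (hS : G.IsSimpleCycle S) {u v : V}
    (hu : u ∈ S) (hv : v ∈ S) : TransGen (fun a b => (a, b) ∈ arcs S) u v := by
  obtain ⟨-, hlen, hclosed, -⟩ := hS
  set R : V → V → Prop := fun a b => (a, b) ∈ arcs S
  have hchain : S.IsChain R := isChain_iff_forall_mem_arcs.2 fun _ _ h => h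
  obtain ⟨a, b, t, rfl⟩ : ∃ a b t, S = a :: b :: t := by
    match S, hlen with
    | a :: b :: t, _ => exact ⟨a, b, t, rfl⟩
  have hlast : (a :: b :: t).getLast (List.cons_ne_nil _ _) = a := by
    rw [← Option.some_inj, ← List.getLast?_eq_some_getLast]; exact hclosed.symm
  have hto : ∀ w ∈ a :: b :: t, ReflTransGen R w a :=
    hchain.backwards_induction (ReflTransGen R · a) _ (fun _ _ => ReflTransGen.head)
      fun _ => by rw [hlast]
  have hfrom : ∀ w ∈ a :: b :: t, ReflTransGen R a w :=
    hchain.induction (ReflTransGen R a ·) _ (fun _ _ h₁ h₂ => h₂.tail h₁)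
      fun _ => ReflTransGen.refl
  have hround : TransGen R a a :=
    TransGen.head' (by simp [R, arcs]) (hto b (by simp))
  exact (hround.trans_left (hfrom v hv)).trans_right (hto u hu)

theorem IsSimpleCycle.exists_mem_arcs {S : List V} (hS : G.IsSimpleCycle S) {v : V}
    (hv : v ∈ S) : ∃ w, (v, w) ∈ arcs S := by
  obtain ⟨w, hw, -⟩ := TransGen.head'_iff.1 (hS.transGen_arcs hv hv)
  exact ⟨w, hw⟩

theorem Subgraph.cactusArcCond_of_arcs_of_cycle {H : Subgraph G} (hG : G.CactusArcCond)
    (h : ∀ x y, H.Adj x y → ∀ p, G.IsSimpleCycle p → (x, y) ∈ arcs p →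
      ∀ a b, (a, b) ∈ arcs p → H.Adj a b) :
    H.toDirGraph.CactusArcCond := by
  intro x y hxy
  have hcycle : ∀ {p}, H.toDirGraph.IsSimpleCycle p → G.IsSimpleCycle p := fun hp =>
    isSimpleCycle_of_forall_arcs hp fun _ _ hab => H.adj_sub (hp.1.adj_of_mem_arcs hab)
  obtain ⟨p, hp, hmem⟩ := (hG x y (H.adj_sub hxy)).1
  exact ⟨⟨p, isSimpleCycle_of_forall_arcs hp (h x y hxy p hp hmem), hmem⟩,
    fun p q hp hpm hq hqm => (hG x y (H.adj_sub hxy)).2 p q (hcycle hp) hpm (hcycle hq) hqm⟩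

def AdjAvoiding (G : DirGraph V) (S : List V) (a b : V) : Prop :=
  G.Adj a b ∧ (a, b) ∉ arcs S

def avoidingComponent (G : DirGraph V) (r : V) (S : List V) : Set V :=
  {x | ReflTransGen (G.AdjAvoiding S) r x ∧ ReflTransGen (G.AdjAvoiding S) x r}

def avoidingComponentSubgraph (G : DirGraph V) (r : V) (S : List V) : Subgraph G where
  verts := G.avoidingComponent r S
  Adj a b := G.AdjAvoiding S a b ∧ a ∈ G.avoidingComponent r S ∧ b ∈ G.avoidingComponent r S
  adj_sub _ _ h := h.1.1
  mem_left _ _ h := h.2.1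
  mem_right _ _ h := h.2.2

variable {r : V} {S : List V}

/-- Suppose `x ≠ y` on `S` and some walk `x ⟶ y` avoids the arcs of `S`. Going from the
successor `z` of `y` along `S` up to `x`, then to `y`, and back to `z`, yields a simple cycle
through the arc `y ⟶ z` of `S`, hence equal to `S`; but it does not contain the arc of `S`
leaving `x`. -/
theorem eq_of_reflTransGen_adjAvoiding (hG : G.CactusArcCond)
    (hS : G.IsSimpleCycle S) {x y : V} (hx : x ∈ S) (hy : y ∈ S)
    (h : ReflTransGen (G.AdjAvoiding S) x y) : x = y := by
  by_contra hxy
  set R : V → V → Prop := fun a b => G.Adj a b ∧ ((a, b) ∈ arcs S → a ≠ x)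
  obtain ⟨z, hyz⟩ := hS.exists_mem_arcs hy
  have hzx : ReflTransGen R z x :=
    ReflTransGen.mono (fun a b hab => ⟨hS.1.adj_of_mem_arcs hab.1, fun _ => hab.2⟩) _ _
      (hS.transGen_arcs (mem_of_mem_arcs hyz).2 hx).to_reflTransGen.restrict_source_ne
  have hxy' : ReflTransGen R x y :=
    ReflTransGen.mono (fun a b hab => ⟨hab.1, fun h => absurd h hab.2⟩) _ _ h
  obtain ⟨P, hchain, hnd, hhead, hlast⟩ :=
    List.exists_nodup_isChain_of_reflTransGen (hzx.trans hxy')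
  have hcycle : G.IsSimpleCycle (y :: P) :=
    isSimpleCycle_cons (hS.1.adj_of_mem_arcs hyz) (hchain.imp fun _ _ h => h.1) hnd hhead hlast
  obtain ⟨P, rfl⟩ : ∃ l, P = z :: l := ⟨P.tail, (List.cons_head?_tail hhead).symm⟩
  have hequiv : CycleEquiv (y :: z :: P) S :=
    (hG y z (hS.1.adj_of_mem_arcs hyz)).2 _ _ hcycle (by simp [arcs]) hS hyz
  obtain ⟨x', hxx'⟩ := hS.exists_mem_arcs hx
  rcases List.mem_cons.1 ((hequiv _).2 hxx') with heq | hmem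
  · exact hxy (Prod.ext_iff.1 heq).1
  · exact (isChain_iff_forall_mem_arcs.1 hchain x x' hmem).2 hxx' rfl

theorem mem_avoidingComponent_self : r ∈ G.avoidingComponent r S :=
  ⟨.refl, .refl⟩

theorem mem_avoidingComponent_of_reflTransGen {x z : V} (hx : x ∈ G.avoidingComponent r S)
    (hxz : ReflTransGen (G.AdjAvoiding S) x z) (hzx : ReflTransGen (G.AdjAvoiding S) z x) :
    z ∈ G.avoidingComponent r S :=
  ⟨hx.1.trans hxz, hzx.trans hx.2⟩

theorem eq_of_mem_avoidingComponent (hG : G.CactusArcCond) (hS : G.IsSimpleCycle S)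
    {t₁ t₂ : V} (h₁ : t₁ ∈ S) (h₂ : t₂ ∈ S) (hK₁ : t₁ ∈ G.avoidingComponent r S)
    (hK₂ : t₂ ∈ G.avoidingComponent r S) : t₁ = t₂ :=
  eq_of_reflTransGen_adjAvoiding hG hS h₁ h₂ (hK₁.2.trans hK₂.1)

theorem exists_mem_reflTransGen_adjAvoiding_to {x y : V} (h : ReflTransGen G.Adj x y)
    (hy : y ∈ S) : ∃ z ∈ S, ReflTransGen (G.AdjAvoiding S) x z := by
  induction h using ReflTransGen.head_induction_on with
  | refl => exact ⟨y, hy, .refl⟩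
  | @head a c hac _ ih =>
    obtain ⟨z, hz, hcz⟩ := ih
    by_cases ha : a ∈ S
    · exact ⟨a, ha, .refl⟩
    · exact ⟨z, hz, hcz.head ⟨hac, fun h => ha (mem_of_mem_arcs h).1⟩⟩

theorem exists_mem_reflTransGen_adjAvoiding_from {x y : V} (h : ReflTransGen G.Adj x y)
    (hx : x ∈ S) : ∃ z ∈ S, ReflTransGen (G.AdjAvoiding S) z y := by
  induction h with
  | refl => exact ⟨x, hx, .refl⟩
  | @tail b c _ hbc ih =>
    obtain ⟨z, hz, hzb⟩ := ih
    by_cases hc : c ∈ S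
    · exact ⟨c, hc, .refl⟩
    · exact ⟨z, hz, hzb.tail ⟨hbc, fun h => hc (mem_of_mem_arcs h).2⟩⟩

theorem exists_mem_avoidingComponent (hG : G.IsCactus) (hS : G.IsSimpleCycle S) :
    ∃ t ∈ S, t ∈ G.avoidingComponent r S := by
  obtain ⟨s, hs⟩ := List.exists_mem_of_ne_nil S (isWalk_iff_isChain.1 hS.1).1
  obtain ⟨z, hz, hrz⟩ :=
    exists_mem_reflTransGen_adjAvoiding_to (hG.1 r s).choose_spec.reflTransGen hs
  obtain ⟨u, hu, hur⟩ :=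
    exists_mem_reflTransGen_adjAvoiding_from (hG.1 z r).choose_spec.reflTransGen hz
  obtain rfl : u = z := eq_of_reflTransGen_adjAvoiding hG.2 hS hu hz (hur.trans hrz)
  exact ⟨u, hu, hrz, hur⟩

theorem reflTransGen_avoidingComponentSubgraph_adj {x y : V}
    (hx : x ∈ G.avoidingComponent r S) (hy : y ∈ G.avoidingComponent r S) :
    ReflTransGen (G.avoidingComponentSubgraph r S).Adj x y := by
  have hto : ∀ {x}, ReflTransGen (G.AdjAvoiding S) x r → ReflTransGen (G.AdjAvoiding S) r x →
      ReflTransGen (G.avoidingComponentSubgraph r S).Adj x r := by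
    intro x hxr
    induction hxr using ReflTransGen.head_induction_on with
    | refl => exact fun _ => .refl
    | @head a c hac hcr ih =>
      exact fun hra => (ih (hra.tail hac)).head ⟨hac, ⟨hra, hcr.head hac⟩, ⟨hra.tail hac, hcr⟩⟩
  have hfrom : ∀ {y}, ReflTransGen (G.AdjAvoiding S) r y → ReflTransGen (G.AdjAvoiding S) y r →
      ReflTransGen (G.avoidingComponentSubgraph r S).Adj r y := by
    intro y hry
    induction hry with
    | refl => exact fun _ => .refl
    | @tail b c hrb hbc ih =>
      exact fun hcr => (ih (hcr.head hbc)).tail ⟨hbc, ⟨hrb, hcr.head hbc⟩, ⟨hrb.tail hbc, hcr⟩⟩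
  exact (hto hx.2 hx.1).trans (hfrom hy.1 hy.2)

/-- A simple cycle through an arc of the component avoids `S` (it would be `S` otherwise),
so it stays in the component. -/
theorem avoidingComponentSubgraph_adj_of_mem_arcs (hG : G.CactusArcCond)
    (hS : G.IsSimpleCycle S) {x y : V} (hxy : (G.avoidingComponentSubgraph r S).Adj x y)
    {p : List V} (hp : G.IsSimpleCycle p) (hxyp : (x, y) ∈ arcs p) {a b : V}
    (hab : (a, b) ∈ arcs p) : (G.avoidingComponentSubgraph r S).Adj a b := by
  have hA : ∀ a b, (a, b) ∈ arcs p → G.AdjAvoiding S a b := fun a b hab =>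
    ⟨hp.1.adj_of_mem_arcs hab, fun habS =>
      hxy.1.2 (((hG a b (hp.1.adj_of_mem_arcs hab)).2 p S hp hab hS habS (x, y)).1 hxyp)⟩
  have hreach : ∀ u ∈ p, ∀ v ∈ p, ReflTransGen (G.AdjAvoiding S) u v := fun u hu v hv =>
    ReflTransGen.mono hA _ _ (hp.transGen_arcs hu hv).to_reflTransGen
  have hx := (mem_of_mem_arcs hxyp).1
  have hK : ∀ z ∈ p, z ∈ G.avoidingComponent r S := fun z hz =>
    mem_avoidingComponent_of_reflTransGen hxy.2.1 (hreach x hx z hz) (hreach z hz x hx)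
  exact ⟨hA a b hab, hK a (mem_of_mem_arcs hab).1, hK b (mem_of_mem_arcs hab).2⟩

theorem avoidingComponentSubgraph_isCactus (hG : G.CactusArcCond) (hS : G.IsSimpleCycle S) :
    (G.avoidingComponentSubgraph r S).IsCactus :=
  ⟨⟨r, mem_avoidingComponent_self⟩,
    fun _ hx _ hy => exists_isWalkFromTo_of_reflTransGen
      (reflTransGen_avoidingComponentSubgraph_adj hx hy),
    Subgraph.cactusArcCond_of_arcs_of_cycle hG fun _ _ hxy _ hp hxyp _ _ hab =>
      avoidingComponentSubgraph_adj_of_mem_arcs hG hS hxy hp hxyp hab⟩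

theorem isConnectingPoint_of_adjAvoiding (hG : G.CactusArcCond) (hS : G.IsSimpleCycle S)
    {t c : V} (ht : t ∈ S) (htc : G.AdjAvoiding S t c) : G.IsConnectingPoint t := by
  obtain ⟨p, hp, hmem⟩ := (hG t c htc.1).1
  exact ⟨p, S, hp, hS, fun he => htc.2 ((he _).1 hmem), (mem_of_mem_arcs hmem).1, ht⟩

namespace Subgraph

variable {H : Subgraph G}

theorem IsCactus.mem_verts_of_adj_of_mem_arcs (hH : H.IsCactus) (hG : G.CactusArcCond)
    (hS : G.IsSimpleCycle S) {x y : V} (hxy : H.Adj x y) (hxyS : (x, y) ∈ arcs S) {z : V}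
    (hz : z ∈ S) : z ∈ H.verts := by
  obtain ⟨p, hp, hxyp⟩ := (hH.2.2 x y hxy).1
  have hpG : G.IsSimpleCycle p :=
    isSimpleCycle_of_forall_arcs hp fun _ _ hab => H.adj_sub (hp.1.adj_of_mem_arcs hab)
  obtain ⟨w, hzw⟩ := hS.exists_mem_arcs hz
  have hequiv := (hG x y (H.adj_sub hxy)).2 p S hpG hxyp hS hxyS
  exact H.mem_left (hp.1.adj_of_mem_arcs ((hequiv _).2 hzw))

theorem IsCactus.verts_subset_avoidingComponent (hH : H.IsCactus)
    (hr : r ∈ H.verts) (havoid : ∀ a b, H.Adj a b → (a, b) ∉ arcs S) :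
    H.verts ⊆ G.avoidingComponent r S := fun v hv =>
  have hmono := ReflTransGen.mono (r := H.Adj) fun a b h => ⟨H.adj_sub h, havoid a b h⟩
  ⟨hmono _ _ (hH.2.1 r hr v hv).choose_spec.reflTransGen,
    hmono _ _ (hH.2.1 v hv r hr).choose_spec.reflTransGen⟩

theorem IsCactus.mem_verts_of_ne (hH : H.IsCactus) (hG : G.CactusArcCond) {t v : V}
    (hS : G.IsSimpleCycle S) (ht : t ∈ S) (htK : t ∈ G.avoidingComponent r S)
    (hv : v ∈ S) (hvt : v ≠ t) (hr : r ∈ H.verts) (hvH : v ∈ H.verts) {z : V} (hz : z ∈ S) :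
    z ∈ H.verts := by
  by_cases h : ∃ a b, H.Adj a b ∧ (a, b) ∈ arcs S
  · obtain ⟨a, b, hab, habS⟩ := h
    exact hH.mem_verts_of_adj_of_mem_arcs hG hS hab habS hz
  · push Not at h
    have hvK := hH.verts_subset_avoidingComponent hr h hvH
    exact absurd (eq_of_mem_avoidingComponent hG hS hv ht hvK htK) hvt

end Subgraph

theorem mem_C_verts_self (v : V) : v ∈ (C G r v).verts := by
  unfold C
  split_ifs with hvr
  · exact hvr
  · exact fun _ _ hW => hW (Set.mem_insert_of_mem _ rfl)

theorem C_le {H : Subgraph G} (hH : H.IsCactus) {v : V} (hr : r ∈ H.verts)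
    (hv : v ∈ H.verts) : (C G r v).le H := by
  have hW : ({r, v} : Set V) ⊆ H.verts :=
    Set.insert_subset_iff.2 ⟨hr, Set.singleton_subset_iff.2 hv⟩
  unfold C
  split_ifs
  · exact ⟨Set.singleton_subset_iff.2 hr, fun _ _ h => h.elim⟩
  · exact ⟨fun _ hx => hx H hH hW, fun _ _ hab => hab.2 H hH hW⟩

theorem pre_of_forall_isCactus {v w : V} (hw : w ≠ r)
    (h : ∀ H : Subgraph G, H.IsCactus → r ∈ H.verts → w ∈ H.verts → v ∈ H.verts) :
    pre G r v w := by
  have hle : ∀ H : Subgraph G, H.IsCactus → {r, w} ⊆ H.verts → (C G r v).le H :=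
    fun H hH hW => C_le hH (hW (Set.mem_insert r _))
      (h H hH (hW (Set.mem_insert r _)) (hW (Set.mem_insert_of_mem r rfl)))
  rw [pre, show C G r w = CsubOf G {r, w} from if_neg hw]
  exact ⟨fun _ hx H hH hW => (hle H hH hW).1 hx,
    fun _ _ hab => ⟨(C G r v).adj_sub hab, fun H hH hW => (hle H hH hW).2 hab⟩⟩

end DirGraph

open DirGraph in
/-- A simple cycle `S` of a rooted cactus digraph has a strongly minimum
vertex `v_S` (equal to `r` if `r ∈ S`, and a connecting point, the nearest to
`r`, otherwise), and all other vertices of `S` are equivalent. -/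
theorem cycle_has_strong_minimum {V : Type} (G : DirGraph V) (r : V)
    (hG : G.IsCactus) (S : List V) (hS : G.IsSimpleCycle S) :
    ∃ vS ∈ S,
      (∀ w ∈ S, w ≠ vS → pre G r vS w ∧ ¬ pre G r w vS) ∧
      (∀ v ∈ S, ∀ w ∈ S, v ≠ vS → w ≠ vS → pre G r v w ∧ pre G r w v) ∧
      (r ∈ S → vS = r) ∧
      (r ∉ S → G.IsConnectingPoint vS ∧
        ∀ c ∈ S, G.IsConnectingPoint c → pre G r vS c) := by
  obtain ⟨t, htS, htK⟩ := exists_mem_avoidingComponent (r := r) hG hS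
  have hunique : ∀ w ∈ S, w ∈ G.avoidingComponent r S → w = t := fun w hw hwK =>
    eq_of_mem_avoidingComponent hG.2 hS hw htS hwK htK
  have hpre : ∀ v ∈ S, ∀ w ∈ S, w ≠ t → pre G r v w := fun v hv w hw hwt =>
    pre_of_forall_isCactus (fun hwr => hwt (hunique w hw (hwr ▸ mem_avoidingComponent_self)))
      fun _ hH hr hwH => hH.mem_verts_of_ne hG.2 hS htS htK hw hwt hr hwH hv
  have hnot_pre : ∀ w ∈ S, w ≠ t → ¬ pre G r w t := fun w hw hwt hwt' =>
    have hCt := C_le (avoidingComponentSubgraph_isCactus hG.2 hS) mem_avoidingComponent_self htK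
    hwt (hunique w hw (hCt.1 (hwt'.1 (mem_C_verts_self w))))
  refine ⟨t, htS, fun w hw hwt => ⟨hpre t htS w hw hwt, hnot_pre w hw hwt⟩,
    fun v hv w hw hvt hwt => ⟨hpre v hv w hw hwt, hpre w hw v hv hvt⟩,
    fun hrS => (hunique r hrS mem_avoidingComponent_self).symm, fun hrS => ⟨?_, fun c hc _ => ?_⟩⟩
  · obtain ⟨c, htc, -⟩ := htK.2.cases_head.resolve_left fun htr => hrS (htr ▸ htS)
    exact isConnectingPoint_of_adjAvoiding hG.2 hS htS htc
  · by_cases hct : c = t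
    · exact hct ▸ ⟨subset_rfl, fun _ _ h => h⟩
    · exact hpre t htS c hc hct
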